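/- Let K be a Cantor set with τ(K) ≥ 1. For any finite tree T with edge relation ∼ on vertices {1,...,k+1}, the set Π_T(K × K) = { (x^i·x^j)_{i∼j} : x^1,...,x^{k+1} ∈ K × K } ⊂ ℝ^k has non-empty interior. -/

import Mathlib

open Set

/-- A Cantor set: a non-empty compact, perfect, totally disconnected subset of ℝ. -/
def IsCantorSet (K : Set ℝ) : Prop :=
  K.Nonempty ∧ IsCompact K ∧ Perfect K ∧ IsTotallyDisconnected K

/-- `(a,b)` is a bounded gap of `K`: a bounded connected component of the complement. -/
def IsGap (K : Set ℝ) (a b : ℝ) : Prop :=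
  a < b ∧ a ∈ K ∧ b ∈ K ∧ Set.Ioo a b ∩ K = ∅

/-- Left endpoints of gaps to the right of `u` of length at least `ℓ` (or the right extreme of `K`). -/
def rightTargets (K : Set ℝ) (u ℓ : ℝ) : Set ℝ :=
  {a | u < a ∧ ((∃ b, IsGap K a b ∧ ℓ ≤ b - a) ∨ a = sSup K)}

/-- Right endpoints of gaps to the left of `u` of length at least `ℓ` (or the left extreme of `K`). -/
def leftTargets (K : Set ℝ) (u ℓ : ℝ) : Set ℝ :=
  {b | b < u ∧ ((∃ a, IsGap K a b ∧ ℓ ≤ b - a) ∨ b = sInf K)}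

/-- The set of bridge/gap ratios of `K` at endpoints of bounded gaps. -/
def thicknessValues (K : Set ℝ) : Set ℝ :=
  {r | ∃ a b, IsGap K a b ∧
    (r = (sInf (rightTargets K b (b - a)) - b) / (b - a) ∨
     r = (a - sSup (leftTargets K a (b - a))) / (b - a))}

/-- Newhouse thickness of `K`. -/
noncomputable def thickness (K : Set ℝ) : ℝ := sInf (thicknessValues K)

def rightTargetsEps (K : Set ℝ) (ε u ℓ : ℝ) : Set ℝ :=
  {a | u < a ∧ ((∃ b, IsGap K a b ∧ (1 - ε) * ℓ < b - a) ∨ a = sSup K)}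

def leftTargetsEps (K : Set ℝ) (ε u ℓ : ℝ) : Set ℝ :=
  {b | b < u ∧ ((∃ a, IsGap K a b ∧ (1 - ε) * ℓ < b - a) ∨ b = sInf K)}

def epsThicknessValues (K : Set ℝ) (ε : ℝ) : Set ℝ :=
  {r | ∃ a b, IsGap K a b ∧
    (r = (sInf (rightTargetsEps K ε b (b - a)) - b) / (b - a) ∨
     r = (a - sSup (leftTargetsEps K ε a (b - a))) / (b - a))}

/-- The `ε`-thickness of `K`. -/
noncomputable def epsThickness (K : Set ℝ) (ε : ℝ) : ℝ := sInf (epsThicknessValues K ε)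

/-- Two bounded subsets of ℝ are linked if the interiors of their convex hulls intersect
but neither is contained in the other. -/
def Linked (K1 K2 : Set ℝ) : Prop :=
  (Set.Ioo (sInf K1) (sSup K1) ∩ Set.Ioo (sInf K2) (sSup K2)).Nonempty ∧
  ¬ Set.Ioo (sInf K1) (sSup K1) ⊆ Set.Ioo (sInf K2) (sSup K2) ∧
  ¬ Set.Ioo (sInf K2) (sSup K2) ⊆ Set.Ioo (sInf K1) (sSup K1)

/-- The standard middle-thirds Cantor set. -/
noncomputable def cantorThirds : Set ℝ :=
  ⋂ n : ℕ,
    (fun S : Set ℝ => (fun x : ℝ => x / 3) '' S ∪ (fun x : ℝ => x / 3 + 2/3) '' S)^[n]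
      (Set.Icc 0 1)

/-- A section of the middle-thirds Cantor set: a scaled translated copy of it sitting inside it. -/
def IsCantorSection (S : Set ℝ) : Prop :=
  ∃ (n : ℕ) (a : ℝ), S = (fun x : ℝ => a + x / 3 ^ n) '' cantorThirds ∧ S ⊆ cantorThirds

/-- The open wedge at `x`. -/
def Wedge (x : ℝ × ℝ) : Set (ℝ × ℝ) :=
  {y | y.2 - x.2 < y.1 - x.1 ∧ y.1 - x.1 < 3 * (y.2 - x.2)}


/-!
Thickness at least one makes Newhouse's gap lemma work: two such sets whose convex hulls overlap
enough must meet. Otherwise some gap of one is interleaved with some gap of the other. Thickness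
then lets us swap the longer of the two for a strictly shorter interleaved gap of the same set, and
this cannot go on forever, because only finitely many gaps are longer than the distance between the
two sets. Applied to `u₁ K` and `t - u₂ K`, this shows that `u₁ K + u₂ K` fills the interior of its
convex hull whenever `u₁ / u₂ ∈ [1/3, 3]`.

Next to the right end `b` of a gap, `K` contains thick pieces `K ∩ [b, R]` with `R` as close to `b`
as we like. Replacing `K` by `-K`, which leaves `Π_T` unchanged, we may take `b > 0`; we then choose
pieces with `b < R₀ < ⋯ < R_k ≤ 3b`, so that any two of their points have ratio in `[1/3, 3]`.
Root the tree and place each vertex at depth `d` in `(K ∩ [b, R_d])²`. Any dot product in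
`(2bR_d, 2bR_{d+1})` asked for on an edge from depth `d` to depth `d + 1` can then be realised by
the choice of the deeper endpoint, so the box of these windows lies in `Π_T(K × K)`.
-/

open Filter Topology
open scoped Pointwise

section Gaps

variable {A : Set ℝ} {a b x : ℝ}

lemma IsGap.notMem (h : IsGap A a b) (hx : x ∈ Ioo a b) : x ∉ A :=
  fun hxA => (h.2.2.2.subset ⟨hx, hxA⟩ : x ∈ (∅ : Set ℝ))

lemma IsGap.right_le_of_mem (h : IsGap A a b) (hx : x ∈ A) (hax : a < x) : b ≤ x :=
  not_lt.1 fun hxb => h.notMem ⟨hax, hxb⟩ hx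

lemma IsGap.le_left_of_mem (h : IsGap A a b) (hx : x ∈ A) (hxb : x < b) : x ≤ a :=
  not_lt.1 fun hax => h.notMem ⟨hax, hxb⟩ hx

lemma StrictMono.isGap_image_iff {f : ℝ → ℝ} (hf : StrictMono f) :
    IsGap (f '' A) (f a) (f b) ↔ IsGap A a b := by
  refine and_congr hf.lt_iff_lt <| and_congr hf.injective.mem_set_image <|
    and_congr hf.injective.mem_set_image ?_
  simp only [eq_empty_iff_forall_notMem, mem_inter_iff, mem_Ioo, mem_image]
  constructor
  · rintro h y ⟨⟨hay, hyb⟩, hy⟩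
    exact h (f y) ⟨⟨hf hay, hf hyb⟩, y, hy, rfl⟩
  · rintro h _ ⟨⟨h1, h2⟩, y, hy, rfl⟩
    exact h y ⟨⟨hf.lt_iff_lt.1 h1, hf.lt_iff_lt.1 h2⟩, hy⟩

lemma isGap_neg : IsGap (-A) a b ↔ IsGap A (-b) (-a) := by
  have : Ioo a b ∩ -A = -(Ioo (-b) (-a) ∩ A) := by
    rw [Set.inter_neg, Set.neg_Ioo, neg_neg, neg_neg]
  simp only [IsGap, Set.mem_neg, neg_lt_neg_iff, this, Set.neg_eq_empty]
  tauto

lemma IsClosed.exists_isGap {p q : ℝ} (hA : IsClosed A) (hp : p ∈ A) (hq : q ∈ A) (hx : x ∉ A)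
    (hpx : p < x) (hxq : x < q) : ∃ a b, IsGap A a b ∧ p ≤ a ∧ a < x ∧ x < b ∧ b ≤ q := by
  have hL : IsCompact (A ∩ Icc p x) := isCompact_Icc.inter_left hA
  have hU : IsCompact (A ∩ Icc x q) := isCompact_Icc.inter_left hA
  obtain ⟨haA, hpa, hax⟩ := hL.sSup_mem ⟨p, hp, le_rfl, hpx.le⟩
  obtain ⟨hbA, hxb, hbq⟩ := hU.sInf_mem ⟨q, hq, hxq.le, le_rfl⟩
  have hax' : sSup (A ∩ Icc p x) < x := lt_of_le_of_ne hax fun h => hx (h ▸ haA)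
  have hxb' : x < sInf (A ∩ Icc x q) := lt_of_le_of_ne hxb fun h => hx (h ▸ hbA)
  refine ⟨_, _, ⟨hax'.trans hxb', haA, hbA, eq_empty_iff_forall_notMem.2 ?_⟩, hpa, hax', hxb', hbq⟩
  rintro z ⟨⟨hz1, hz2⟩, hz⟩
  rcases le_total z x with hzx | hxz
  · exact hz1.not_ge (le_csSup hL.bddAbove ⟨hz, hpa.trans hz1.le, hzx⟩)
  · exact hz2.not_ge (csInf_le hU.bddBelow ⟨hz, hxz, hz2.le.trans hbq⟩)

lemma finite_setOf_isGap {ε : ℝ} (hA : Bornology.IsBounded A) (hε : 0 < ε) :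
    {g : ℝ × ℝ | IsGap A g.1 g.2 ∧ ε ≤ g.2 - g.1}.Finite := by
  set S := {g : ℝ × ℝ | IsGap A g.1 g.2 ∧ ε ≤ g.2 - g.1}
  have hsep : ∀ g ∈ S, ∀ g' ∈ S, g.1 < g'.1 → ε ≤ g'.1 - g.1 := fun g hg g' hg' h =>
    hg.2.trans (by linarith [hg.1.right_le_of_mem hg'.1.2.1 h])
  have hinj : InjOn (fun g : ℝ × ℝ => ⌊g.1 / ε⌋) S := by
    intro g hg g' hg' hfl
    have hlt : |g.1 - g'.1| < ε := by
      have := Int.abs_sub_lt_one_of_floor_eq_floor hfl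
      rwa [← sub_div, abs_div, abs_of_pos hε, div_lt_one hε] at this
    have h1 : g.1 = g'.1 := by
      rcases lt_trichotomy g.1 g'.1 with h | h | h
      · linarith [hsep g hg g' hg' h, abs_sub_lt_iff.1 hlt]
      · exact h
      · linarith [hsep g' hg' g hg h, abs_sub_lt_iff.1 hlt]
    have h2 : g.2 = g'.2 := le_antisymm
      (hg.1.right_le_of_mem hg'.1.2.2.1 (h1 ▸ hg'.1.1))
      (hg'.1.right_le_of_mem hg.1.2.2.1 (h1 ▸ hg.1.1))
    exact Prod.ext h1 h2
  refine Finite.of_finite_image ((finite_Icc ⌊sInf A / ε⌋ ⌊sSup A / ε⌋).subset ?_) hinj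
  rintro _ ⟨g, hg, rfl⟩
  have hmem := hA.subset_Icc_sInf_sSup hg.1.2.1
  exact ⟨Int.floor_mono (div_le_div_of_nonneg_right hmem.1 hε.le),
    Int.floor_mono (div_le_div_of_nonneg_right hmem.2 hε.le)⟩

end Gaps

namespace IsCantorSet

variable {A : Set ℝ} {a b c ε : ℝ}

lemma isClosed (hA : IsCantorSet A) : IsClosed A := hA.2.1.isClosed

lemma image (hA : IsCantorSet A) {f : ℝ → ℝ} (hf : IsEmbedding f) : IsCantorSet (f '' A) := by
  obtain ⟨hne, hcpt, hperf, htd⟩ := hA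
  refine ⟨hne.image f, hcpt.image hf.continuous, ⟨(hcpt.image hf.continuous).isClosed, ?_⟩,
    hf.isTotallyDisconnected_image.2 htd⟩
  rintro _ ⟨x, hx, rfl⟩
  simpa [Filter.map_principal] using (hperf.acc x hx).map hf.continuous.continuousAt hf.injective

lemma neg (hA : IsCantorSet A) : IsCantorSet (-A) := by
  simpa [image_neg_eq_neg] using hA.image (Homeomorph.neg ℝ).isEmbedding

lemma exists_mem_gt (hA : IsCantorSet A) (hab : IsGap A a b) (hε : 0 < ε) :
    ∃ y ∈ A, b < y ∧ y < b + ε := by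
  obtain ⟨y, ⟨hy, hyA⟩, hyb⟩ := accPt_iff_nhds.1 (hA.2.2.1.acc b hab.2.2.1)
    (Metric.ball b (min ε (b - a))) (Metric.ball_mem_nhds _ (lt_min hε (sub_pos.2 hab.1)))
  rw [Metric.mem_ball, Real.dist_eq, abs_sub_lt_iff, lt_min_iff, lt_min_iff] at hy
  exact ⟨y, hyA, lt_of_le_of_ne (hab.right_le_of_mem hyA (by linarith)) (Ne.symm hyb),
    by linarith⟩

lemma exists_mem_lt (hA : IsCantorSet A) (hab : IsGap A a b) (hε : 0 < ε) :
    ∃ y ∈ A, a - ε < y ∧ y < a := by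
  obtain ⟨y, hy, h1, h2⟩ :=
    hA.neg.exists_mem_gt (a := -b) (b := -a) (isGap_neg.2 (by simpa using hab)) hε
  exact ⟨-y, hy, by linarith, by linarith⟩

lemma not_isGap_of_isGap (hA : IsCantorSet A) (hab : IsGap A a b) : ¬ IsGap A b c := fun hbc => by
  obtain ⟨y, hy, h1, h2⟩ := hA.exists_mem_gt hab (sub_pos.2 hbc.1)
  exact hbc.notMem ⟨h1, by linarith⟩ hy

lemma exists_isGap_between (hA : IsCantorSet A) {p q : ℝ} (hp : p ∈ A) (hq : q ∈ A)
    (hpq : p < q) : ∃ a b, IsGap A a b ∧ p ≤ a ∧ b ≤ q := by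
  obtain ⟨x, hx, hxA⟩ : ∃ x ∈ Ioo p q, x ∉ A := by
    by_contra! h
    have hsub : Icc p q ⊆ A := fun z hz => by
      rcases hz.1.eq_or_lt with rfl | h1
      · exact hp
      rcases hz.2.eq_or_lt with rfl | h2
      · exact hq
      exact h z ⟨h1, h2⟩
    exact hpq.ne (hA.2.2.2 _ hsub isPreconnected_Icc (left_mem_Icc.2 hpq.le)
      (right_mem_Icc.2 hpq.le))
  obtain ⟨a, b, hab, hpa, -, -, hbq⟩ := hA.isClosed.exists_isGap hp hq hxA hx.1 hx.2
  exact ⟨a, b, hab, hpa, hbq⟩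

lemma exists_isGap (hA : IsCantorSet A) : ∃ a b, IsGap A a b := by
  obtain ⟨p, hp⟩ := hA.1
  obtain ⟨q, ⟨-, hq⟩, hqp⟩ := accPt_iff_nhds.1 (hA.2.2.1.acc p hp) univ univ_mem
  rcases hqp.lt_or_gt with h | h
  · obtain ⟨a, b, hab, -⟩ := hA.exists_isGap_between hq hp h
    exact ⟨a, b, hab⟩
  · obtain ⟨a, b, hab, -⟩ := hA.exists_isGap_between hp hq h
    exact ⟨a, b, hab⟩

lemma exists_isGap_near_right (hA : IsCantorSet A) (hab : IsGap A a b) (hε : 0 < ε) :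
    ∃ x y, IsGap A x y ∧ b < x ∧ y < b + ε := by
  obtain ⟨z, hz, hbz, hzε⟩ := hA.exists_mem_gt hab hε
  obtain ⟨x, y, hxy, hbx, hyz⟩ := hA.exists_isGap_between hab.2.2.1 hz hbz
  refine ⟨x, y, hxy, lt_of_le_of_ne hbx ?_, by linarith⟩
  rintro rfl
  exact hA.not_isGap_of_isGap hab hxy

end IsCantorSet

/-- Newhouse thickness at least one, read gap by gap: on each side of a gap `(a, b)` the bridge,
which runs to the nearest gap at least as long or to the end of the set, has length `≥ b - a`. -/
structure IsThickCantor (A : Set ℝ) : Prop where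
  isCantorSet : IsCantorSet A
  exists_ge : ∀ a b, IsGap A a b → ∃ z ∈ A, 2 * b - a ≤ z
  exists_le : ∀ a b, IsGap A a b → ∃ z ∈ A, z ≤ 2 * a - b
  gap_lt_right : ∀ a b a' b', IsGap A a b → IsGap A a' b' → b ≤ a' → a' < 2 * b - a →
    b' - a' < b - a
  gap_lt_left : ∀ a b a' b', IsGap A a b → IsGap A a' b' → b' ≤ a → 2 * a - b < b' →
    b' - a' < b - a

namespace IsThickCantor

variable {A : Set ℝ} {a b i s : ℝ}

lemma neg (hA : IsThickCantor A) : IsThickCantor (-A) where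
  isCantorSet := hA.isCantorSet.neg
  exists_ge a b h := by
    obtain ⟨z, hz, hle⟩ := hA.exists_le _ _ (isGap_neg.1 h)
    exact ⟨-z, by simpa using hz, by linarith⟩
  exists_le a b h := by
    obtain ⟨z, hz, hle⟩ := hA.exists_ge _ _ (isGap_neg.1 h)
    exact ⟨-z, by simpa using hz, by linarith⟩
  gap_lt_right a b a' b' h h' h1 h2 := by
    linarith [hA.gap_lt_left _ _ _ _ (isGap_neg.1 h) (isGap_neg.1 h') (by linarith) (by linarith)]
  gap_lt_left a b a' b' h h' h1 h2 := by
    linarith [hA.gap_lt_right _ _ _ _ (isGap_neg.1 h) (isGap_neg.1 h') (by linarith) (by linarith)]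

lemma image_mul_add (hA : IsThickCantor A) {c : ℝ} (hc : 0 < c) (d : ℝ) :
    IsThickCantor ((fun x => c * x + d) '' A) := by
  set f : ℝ → ℝ := fun x => c * x + d
  have hf : StrictMono f := fun x y h => by simp only [f]; nlinarith
  have preimage : ∀ x y, IsGap (f '' A) x y → ∃ a b, x = f a ∧ y = f b ∧ IsGap A a b := by
    rintro _ _ h
    obtain ⟨⟨a, -, rfl⟩, ⟨b, -, rfl⟩⟩ := And.intro h.2.1 h.2.2.1
    exact ⟨a, b, rfl, rfl, hf.isGap_image_iff.1 h⟩
  have hemb : IsEmbedding f :=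
    ((Homeomorph.mulLeft₀ c hc.ne').trans (Homeomorph.addRight d)).isEmbedding
  refine ⟨hA.isCantorSet.image hemb, fun x y h => ?_, fun x y h => ?_,
    fun x y x' y' h h' h1 h2 => ?_, fun x y x' y' h h' h1 h2 => ?_⟩
  · obtain ⟨a, b, rfl, rfl, hab⟩ := preimage x y h
    obtain ⟨z, hz, hle⟩ := hA.exists_ge a b hab
    exact ⟨f z, mem_image_of_mem f hz, by simp only [f]; nlinarith⟩
  · obtain ⟨a, b, rfl, rfl, hab⟩ := preimage x y h
    obtain ⟨z, hz, hle⟩ := hA.exists_le a b hab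
    exact ⟨f z, mem_image_of_mem f hz, by simp only [f]; nlinarith⟩
  · obtain ⟨a, b, rfl, rfl, hab⟩ := preimage x y h
    obtain ⟨a', b', rfl, rfl, ha'b'⟩ := preimage x' y' h'
    simp only [f] at h1 h2 ⊢
    nlinarith [hA.gap_lt_right a b a' b' hab ha'b' (by nlinarith) (by nlinarith)]
  · obtain ⟨a, b, rfl, rfl, hab⟩ := preimage x y h
    obtain ⟨a', b', rfl, rfl, ha'b'⟩ := preimage x' y' h'
    simp only [f] at h1 h2 ⊢
    nlinarith [hA.gap_lt_left a b a' b' hab ha'b' (by nlinarith) (by nlinarith)]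

lemma three_mul_sub_le (hA : IsThickCantor A) (hi : IsLeast A i) (hs : IsGreatest A s)
    (hab : IsGap A a b) : 3 * (b - a) ≤ s - i := by
  obtain ⟨z, hz, hzb⟩ := hA.exists_ge a b hab
  obtain ⟨z', hz', hza⟩ := hA.exists_le a b hab
  linarith [hs.2 hz, hi.2 hz']

end IsThickCantor

def GapsLinked (A B : Set ℝ) (g h : ℝ × ℝ) : Prop :=
  IsGap A g.1 g.2 ∧ IsGap B h.1 h.2 ∧ g.1 < h.1 ∧ h.1 < g.2 ∧ g.2 < h.2

namespace GapsLinked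

variable {A B : Set ℝ} {g h : ℝ × ℝ}

lemma neg (hl : GapsLinked A B g h) : GapsLinked (-B) (-A) (-h.2, -h.1) (-g.2, -g.1) := by
  obtain ⟨hg, hh, h1, h2, h3⟩ := hl
  exact ⟨isGap_neg.2 (by simpa using hh), isGap_neg.2 (by simpa using hg), neg_lt_neg h3,
    neg_lt_neg h2, neg_lt_neg h1⟩

lemma le_sub {ε : ℝ} (hl : GapsLinked A B g h) (hsep : ∀ x ∈ A, ∀ y ∈ B, ε ≤ dist x y) :
    ε ≤ g.2 - g.1 ∧ ε ≤ h.2 - h.1 := by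
  obtain ⟨hg, hh, h1, h2, h3⟩ := hl
  have := hsep _ hg.2.2.1 _ hh.2.1
  rw [Real.dist_eq, abs_of_pos (sub_pos.2 h2)] at this
  constructor <;> linarith

end GapsLinked

namespace IsThickCantor

variable {A B K : Set ℝ} {g h : ℝ × ℝ} {a b i s ε : ℝ}

lemma exists_gapsLinked_of_le (hA : IsThickCantor A) (hAB : Disjoint A B)
    (hl : GapsLinked A B g h) (hle : h.2 - h.1 ≤ g.2 - g.1) :
    ∃ g', GapsLinked B A h g' ∧ g'.2 - g'.1 < g.2 - g.1 := by
  obtain ⟨hg, hh, h1, h2, h3⟩ := hl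
  obtain ⟨z, hz, hzg⟩ := hA.exists_ge _ _ hg
  obtain ⟨p, q, hpq, hgp, hp, hq, -⟩ := hA.isCantorSet.isClosed.exists_isGap hg.2.2.1 hz
    (hAB.notMem_of_mem_right hh.2.2.1) h3 (by linarith)
  exact ⟨(p, q), ⟨hh, hpq, by linarith, hp, hq⟩,
    hA.gap_lt_right _ _ _ _ hg hpq hgp (by linarith)⟩

lemma exists_gapsLinked_shorter (hA : IsThickCantor A) (hB : IsThickCantor B)
    (hAB : Disjoint A B) (hl : GapsLinked A B g h) :
    (∃ g', GapsLinked B A h g' ∧ g'.2 - g'.1 < g.2 - g.1) ∨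
      ∃ h', GapsLinked B A h' g ∧ h'.2 - h'.1 < h.2 - h.1 := by
  rcases le_total (h.2 - h.1) (g.2 - g.1) with hle | hle
  · exact .inl (hA.exists_gapsLinked_of_le hAB hl hle)
  · have hBA : Disjoint (-B) (-A) :=
      disjoint_left.2 fun _ hB' hA' => disjoint_left.1 hAB (mem_neg.1 hA') (mem_neg.1 hB')
    obtain ⟨h', hl', hlt⟩ := hB.neg.exists_gapsLinked_of_le hBA hl.neg (by dsimp only; linarith)
    exact .inr ⟨(-h'.2, -h'.1), by simpa using hl'.neg, by dsimp only; linarith⟩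

lemma inter_nonempty_of_gapsLinked (hA : IsThickCantor A) (hB : IsThickCantor B)
    (hl : GapsLinked A B g h) : (A ∩ B).Nonempty := by
  by_contra hne
  have hAB : Disjoint A B := disjoint_iff_inter_eq_empty.2 (not_nonempty_iff_eq_empty.1 hne)
  obtain ⟨r, hr, hsep⟩ := Metric.exists_pos_forall_lt_edist hA.isCantorSet.2.1
    hB.isCantorSet.isClosed hAB
  have hsep : ∀ x ∈ A, ∀ y ∈ B, (r : ℝ) ≤ dist x y := fun x hx y hy => by
    have := hsep x hx y hy
    rw [edist_nndist, ENNReal.coe_lt_coe, ← NNReal.coe_lt_coe, coe_nndist] at this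
    exact this.le
  set S := {p : (ℝ × ℝ) × (ℝ × ℝ) | GapsLinked A B p.1 p.2 ∨ GapsLinked B A p.2 p.1}
  have hfin : S.Finite := by
    refine ((finite_setOf_isGap hA.isCantorSet.2.1.isBounded hr).prod
      (finite_setOf_isGap hB.isCantorSet.2.1.isBounded hr)).subset ?_
    rintro p (hp | hp)
    · exact ⟨⟨hp.1, (hp.le_sub hsep).1⟩, hp.2.1, (hp.le_sub hsep).2⟩
    · have := hp.le_sub fun x hx y hy => (hsep y hy x hx).trans_eq (dist_comm _ _)
      exact ⟨⟨hp.2.1, this.2⟩, hp.1, this.1⟩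
  obtain ⟨p, hp, hmin⟩ := S.exists_min_image (fun p => (p.1.2 - p.1.1) + (p.2.2 - p.2.1)) hfin
    ⟨(g, h), .inl hl⟩
  rcases hp with hp | hp
  · rcases hA.exists_gapsLinked_shorter hB hAB hp with ⟨g', hl', hlt⟩ | ⟨h', hl', hlt⟩
    · linarith [hmin (g', p.2) (.inr hl')]
    · linarith [hmin (p.1, h') (.inr hl')]
  · rcases hB.exists_gapsLinked_shorter hA hAB.symm hp with ⟨h', hl', hlt⟩ | ⟨g', hl', hlt⟩
    · linarith [hmin (p.1, h') (.inl hl')]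
    · linarith [hmin (g', p.2) (.inl hl')]

lemma inter_nonempty_of_le (hA : IsThickCantor A) (hB : IsThickCantor B) {iA sA iB sB : ℝ}
    (hiA : IsLeast A iA) (hsA : IsGreatest A sA) (hiB : IsLeast B iB) (hsB : IsGreatest B sB)
    (hs : sB ≤ sA) (h₁ : iA < sB) (h₂ : iB + (sA - iA) / 3 ≤ sB) : (A ∩ B).Nonempty := by
  by_cases hsBA : sB ∈ A
  · exact ⟨sB, hsBA, hsB.1⟩
  obtain ⟨a, b, hab, -, ha, hb, -⟩ := hA.isCantorSet.isClosed.exists_isGap hiA.1 hsA.1 hsBA h₁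
    (lt_of_le_of_ne hs fun h => hsBA (h ▸ hsA.1))
  have hlen := hA.three_mul_sub_le hiA hsA hab
  by_cases haB : a ∈ B
  · exact ⟨a, hab.2.1, haB⟩
  obtain ⟨c, d, hcd, -, hc, hd, -⟩ := hB.isCantorSet.isClosed.exists_isGap hiB.1 hsB.1 haB
    (by linarith) ha
  obtain ⟨z, hz, hzd⟩ := hB.exists_ge c d hcd
  obtain ⟨y, hyB, hyA⟩ := hB.inter_nonempty_of_gapsLinked hA (g := (c, d)) (h := (a, b))
    ⟨hcd, hab, hc, hd, by linarith [hsB.2 hz, hcd.1]⟩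
  exact ⟨y, hyA, hyB⟩

lemma exists_mul_add_mul_eq (hA : IsThickCantor A) (hi : IsLeast A i) (hs : IsGreatest A s)
    {u₁ u₂ t : ℝ} (hu₁ : 0 < u₁) (h₁₂ : u₁ ≤ 3 * u₂) (h₂₁ : u₂ ≤ 3 * u₁)
    (ht : t ∈ Ioo ((u₁ + u₂) * i) ((u₁ + u₂) * s)) :
    ∃ y₁ ∈ A, ∃ y₂ ∈ A, u₁ * y₁ + u₂ * y₂ = t := by
  have hu₂ : 0 < u₂ := by linarith
  have his : i ≤ s := hs.2 hi.1
  have hmono : ∀ {c : ℝ} (d : ℝ), 0 < c → StrictMono fun x => c * x + d :=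
    fun d hc x y h => by simp only; nlinarith
  have hi' : IsGreatest (-A) (-i) := ⟨by simpa using hi.1, fun x hx => by linarith [hi.2 hx]⟩
  have hs' : IsLeast (-A) (-s) := ⟨by simpa using hs.1, fun x hx => by linarith [hs.2 hx]⟩
  suffices ((fun x => u₁ * x + 0) '' A ∩ (fun x => u₂ * x + t) '' (-A)).Nonempty by
    obtain ⟨_, ⟨y₁, hy₁, rfl⟩, y, hy, hyeq⟩ := this
    exact ⟨y₁, hy₁, -y, hy, by linarith⟩
  have hA₁ := hA.image_mul_add hu₁ 0
  have hA₂ := hA.neg.image_mul_add hu₂ t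
  have hi₁ := ((hmono 0 hu₁).map_isLeast).2 hi
  have hs₁ := ((hmono 0 hu₁).map_isGreatest).2 hs
  have hi₂ := ((hmono t hu₂).map_isLeast).2 hs'
  have hs₂ := ((hmono t hu₂).map_isGreatest).2 hi'
  rcases le_total (u₂ * -i + t) (u₁ * s + 0) with hle | hle
  · exact hA₁.inter_nonempty_of_le hA₂ hi₁ hs₁ hi₂ hs₂ hle (by linarith [ht.1]) (by nlinarith)
  · rw [inter_comm]
    exact hA₂.inter_nonempty_of_le hA₁ hi₂ hs₂ hi₁ hs₁ hle (by linarith [ht.2]) (by nlinarith)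

lemma inter_Icc (hK : IsThickCantor K) {a' b' : ℝ} (hab : IsGap K a b) (ha'b' : IsGap K a' b')
    (hba' : b < a') (ha' : a' < 2 * b - a)
    (hshort : ∀ x y, IsGap K x y → b < x → y < a' → y - x ≤ b' - a') :
    IsThickCantor (K ∩ Icc b a') := by
  have hC := hK.isCantorSet
  have hgap : ∀ x y, IsGap (K ∩ Icc b a') x y → IsGap K x y ∧ b < x ∧ y < a' := by
    intro x y h
    have hxy : IsGap K x y := ⟨h.1, h.2.1.1, h.2.2.1.1, eq_empty_iff_forall_notMem.2
      fun z hz => h.notMem hz.1 ⟨hz.2, h.2.1.2.1.trans hz.1.1.le, hz.1.2.le.trans h.2.2.1.2.2⟩⟩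
    refine ⟨hxy, lt_of_le_of_ne h.2.1.2.1 ?_, lt_of_le_of_ne h.2.2.1.2.2 ?_⟩
    · rintro rfl
      exact hC.not_isGap_of_isGap hab hxy
    · rintro rfl
      exact hC.not_isGap_of_isGap hxy ha'b'
  have hopen : K ∩ Icc b a' = Ioo a b' ∩ K := by
    ext z
    refine ⟨fun ⟨hz, hbz, hza⟩ => ⟨⟨hab.1.trans_le hbz, hza.trans_lt ha'b'.1⟩, hz⟩,
      fun ⟨⟨haz, hzb⟩, hz⟩ => ⟨hz, hab.right_le_of_mem hz haz, ha'b'.le_left_of_mem hz hzb⟩⟩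
  have hb : b ∈ K ∩ Icc b a' := ⟨hab.2.2.1, le_rfl, hba'.le⟩
  have ha'' : a' ∈ K ∩ Icc b a' := ⟨ha'b'.2.1, hba'.le, le_rfl⟩
  refine ⟨⟨⟨b, hb⟩, hC.2.1.inter_right isClosed_Icc,
    ⟨(hC.2.1.inter_right isClosed_Icc).isClosed, hopen ▸ hC.2.2.1.2.open_inter isOpen_Ioo⟩,
    fun t ht => hC.2.2.2 t (ht.trans inter_subset_left)⟩,
    fun x y h => ⟨a', ha'', ?_⟩, fun x y h => ⟨b, hb, ?_⟩,
    fun x y x' y' h h' => hK.gap_lt_right x y x' y' (hgap x y h).1 (hgap x' y' h').1,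
    fun x y x' y' h h' => hK.gap_lt_left x y x' y' (hgap x y h).1 (hgap x' y' h').1⟩
  · obtain ⟨hxy, hbx, hya'⟩ := hgap x y h
    by_contra! hlt
    linarith [hK.gap_lt_right x y a' b' hxy ha'b' hya'.le hlt, hshort x y hxy hbx hya']
  · obtain ⟨hxy, hbx, hya'⟩ := hgap x y h
    by_contra! hlt
    linarith [hK.gap_lt_left x y a b hxy hab hbx.le hlt,
      hK.gap_lt_right a b x y hab hxy hbx.le (by linarith [hxy.1])]

/-- `R` is the left end of the longest gap of `K` that lies in `(b, b + ε)`. -/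
lemma exists_isThickCantor_inter_Icc (hK : IsThickCantor K) (hab : IsGap K a b) (hε : 0 < ε)
    (hεab : ε ≤ b - a) : ∃ R ∈ K, b < R ∧ R < b + ε ∧ IsThickCantor (K ∩ Icc b R) := by
  set F := {g : ℝ × ℝ | IsGap K g.1 g.2 ∧ b < g.1 ∧ g.2 < b + ε}
  obtain ⟨x₀, y₀, h₀, hbx₀, hy₀⟩ := hK.isCantorSet.exists_isGap_near_right hab hε
  have hfin : (F ∩ {g | y₀ - x₀ ≤ g.2 - g.1}).Finite :=
    (finite_setOf_isGap hK.isCantorSet.2.1.isBounded (sub_pos.2 h₀.1)).subset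
      fun g hg => ⟨hg.1.1, hg.2⟩
  obtain ⟨⟨x, y⟩, ⟨⟨hxy, hbx, hy⟩, hlen⟩, hmax⟩ :=
    exists_max_image _ (fun g => g.2 - g.1) hfin
      ⟨(x₀, y₀), ⟨h₀, hbx₀, hy₀⟩, le_refl (y₀ - x₀)⟩
  refine ⟨x, hxy.2.1, hbx, by linarith [hxy.1],
    hK.inter_Icc hab hxy hbx (by linarith [hxy.1]) fun x' y' h' hbx' hy' => ?_⟩
  by_cases hl : y₀ - x₀ ≤ y' - x'
  · exact hmax (x', y') ⟨⟨h', hbx', by linarith [hxy.1]⟩, hl⟩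
  · linarith [show y₀ - x₀ ≤ y - x from hlen]

lemma exists_nested_inter_Icc (hK : IsThickCantor K) (hab : IsGap K a b) (hε : 0 < ε)
    (hεab : ε ≤ b - a) (k : ℕ) : ∃ R : ℕ → ℝ,
      (∀ d, R d ∈ K ∧ b < R d ∧ R d < b + ε ∧ IsThickCantor (K ∩ Icc b (R d))) ∧
      ∀ d < k, R d < R (d + 1) := by
  induction k with
  | zero =>
    obtain ⟨R, hR⟩ := hK.exists_isThickCantor_inter_Icc hab hε hεab
    exact ⟨fun _ => R, fun _ => hR, fun d hd => absurd hd d.not_lt_zero⟩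
  | succ k ih =>
    obtain ⟨R, hR, hmono⟩ := ih
    obtain ⟨R₀, hR₀K, hbR₀, hR₀, hR₀thick⟩ :=
      hK.exists_isThickCantor_inter_Icc hab (sub_pos.2 (hR 0).2.1) (by linarith [(hR 0).2.2.1])
    refine ⟨fun | 0 => R₀ | d + 1 => R d, fun d => ?_, fun d hd => ?_⟩
    · cases d with
      | zero => exact ⟨hR₀K, hbR₀, by linarith [(hR 0).2.2.1], hR₀thick⟩
      | succ d => exact hR d
    · cases d with
      | zero => exact hR₀.trans_eq (by ring)
      | succ d => exact hmono d (by omega)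

/-- The levels are `K ∩ [b, R d]` for an increasing `R` with `R d ≤ 3 b`, and the windows are
`(2 b R d, 2 b R (d + 1))`. -/
lemma exists_levels (hK : IsThickCantor K) (hab : IsGap K a b) (hb : 0 < b) (k : ℕ) :
    ∃ (A : ℕ → Set ℝ) (lo hi : ℕ → ℝ), (∀ d, A d ⊆ K) ∧ (A 0).Nonempty ∧
      (∀ d < k, lo d < hi d) ∧
      ∀ d < k, ∀ u₁ ∈ A d, ∀ u₂ ∈ A d, ∀ t ∈ Ioo (lo d) (hi d),
        ∃ y₁ ∈ A (d + 1), ∃ y₂ ∈ A (d + 1), u₁ * y₁ + u₂ * y₂ = t := by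
  obtain ⟨R, hR, hmono⟩ := hK.exists_nested_inter_Icc hab
    (lt_min (sub_pos.2 hab.1) (by linarith : 0 < 2 * b)) (min_le_left _ _) k
  have hR3 : ∀ d, R d ≤ 3 * b := fun d => by linarith [(hR d).2.2.1, min_le_right (b - a) (2 * b)]
  refine ⟨fun d => K ∩ Icc b (R d), fun d => 2 * b * R d, fun d => 2 * b * R (d + 1),
    fun d => inter_subset_left, ⟨b, hab.2.2.1, le_rfl, (hR 0).2.1.le⟩,
    fun d hd => by nlinarith [hmono d hd], ?_⟩
  rintro d hd u₁ ⟨-, hbu₁, hu₁⟩ u₂ ⟨-, hbu₂, hu₂⟩ t ⟨ht₁, ht₂⟩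
  obtain ⟨hRK, hbR, -, hthick⟩ := hR (d + 1)
  exact hthick.exists_mul_add_mul_eq ⟨⟨hab.2.2.1, le_rfl, hbR.le⟩, fun z hz => hz.2.1⟩
    ⟨⟨hRK, hbR.le, le_rfl⟩, fun z hz => hz.2.2⟩ (by linarith) (by linarith [hR3 d])
    (by linarith [hR3 d]) ⟨by nlinarith, by nlinarith⟩

end IsThickCantor

section Thickness

variable {K : Set ℝ} {a b : ℝ}

lemma one_le_of_mem_thicknessValues (hτ : 1 ≤ thickness K) {r : ℝ} (hr : r ∈ thicknessValues K) :
    1 ≤ r := by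
  by_cases hbdd : BddBelow (thicknessValues K)
  · exact hτ.trans (csInf_le hbdd hr)
  · rw [thickness, Real.sInf_of_not_bddBelow hbdd] at hτ
    norm_num at hτ

lemma two_mul_sub_le_sInf_rightTargets (hτ : 1 ≤ thickness K) (hab : IsGap K a b) :
    2 * b - a ≤ sInf (rightTargets K b (b - a)) := by
  have := one_le_of_mem_thicknessValues hτ ⟨a, b, hab, .inl rfl⟩
  rw [le_div_iff₀ (sub_pos.2 hab.1)] at this
  linarith

lemma sSup_leftTargets_le (hτ : 1 ≤ thickness K) (hab : IsGap K a b) :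
    sSup (leftTargets K a (b - a)) ≤ 2 * a - b := by
  have := one_le_of_mem_thicknessValues hτ ⟨a, b, hab, .inr rfl⟩
  rw [le_div_iff₀ (sub_pos.2 hab.1)] at this
  linarith

lemma IsCantorSet.isThickCantor (hK : IsCantorSet K) (hτ : 1 ≤ thickness K) :
    IsThickCantor K := by
  have bddR : ∀ u ℓ, BddBelow (rightTargets K u ℓ) := fun u ℓ => ⟨u, fun x hx => hx.1.le⟩
  have bddL : ∀ u ℓ, BddAbove (leftTargets K u ℓ) := fun u ℓ => ⟨u, fun x hx => hx.1.le⟩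
  have hsup : ∀ {a b}, IsGap K a b → b < sSup K := fun hab => by
    obtain ⟨y, hy, hby, -⟩ := hK.exists_mem_gt hab one_pos
    exact hby.trans_le (le_csSup hK.2.1.bddAbove hy)
  have hinf : ∀ {a b}, IsGap K a b → sInf K < a := fun hab => by
    obtain ⟨y, hy, -, hya⟩ := hK.exists_mem_lt hab one_pos
    exact (csInf_le hK.2.1.bddBelow hy).trans_lt hya
  refine ⟨hK, fun a b hab => ⟨sSup K, hK.2.1.sSup_mem hK.1, ?_⟩,
    fun a b hab => ⟨sInf K, hK.2.1.sInf_mem hK.1, ?_⟩,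
    fun a b a' b' hab ha'b' hba' ha' => ?_, fun a b a' b' hab ha'b' ha'b ha' => ?_⟩
  · exact (two_mul_sub_le_sInf_rightTargets hτ hab).trans
      (csInf_le (bddR _ _) ⟨hsup hab, .inr rfl⟩)
  · exact (le_csSup (bddL _ _) ⟨hinf hab, .inr rfl⟩).trans (sSup_leftTargets_le hτ hab)
  · by_contra! hle
    have hba'' : b < a' := lt_of_le_of_ne hba' fun h => hK.not_isGap_of_isGap hab (h ▸ ha'b')
    linarith [two_mul_sub_le_sInf_rightTargets hτ hab,
      csInf_le (bddR _ _) (⟨hba'', .inl ⟨b', ha'b', hle⟩⟩ : a' ∈ rightTargets K b (b - a))]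
  · by_contra! hle
    have hb'a : b' < a := lt_of_le_of_ne ha'b fun h => hK.not_isGap_of_isGap ha'b' (h ▸ hab)
    linarith [sSup_leftTargets_le hτ hab,
      le_csSup (bddL _ _) (⟨hb'a, .inl ⟨a', ha'b', hle⟩⟩ : b' ∈ leftTargets K a (b - a))]

end Thickness


/-- `Π_G(K × K)` in the paper's notation. -/
def edgeDotSet {V : Type*} (G : SimpleGraph V) (K : Set ℝ) : Set (G.edgeSet → ℝ) :=
  {f | ∃ x : V → ℝ × ℝ, (∀ i, x i ∈ K ×ˢ K) ∧
    ∀ i j, (h : G.Adj i j) →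
      f ⟨s(i, j), G.mem_edgeSet.mpr h⟩ = (x i).1 * (x j).1 + (x i).2 * (x j).2}

lemma edgeDotSet_subset_neg {V : Type*} (G : SimpleGraph V) (K : Set ℝ) :
    edgeDotSet G K ⊆ edgeDotSet G (-K) := by
  rintro f ⟨x, hx, hf⟩
  refine ⟨-x, fun i => ?_, fun i j h => by simp [hf i j h]⟩
  simpa using hx i

lemma edgeDotSet_neg {V : Type*} (G : SimpleGraph V) (K : Set ℝ) :
    edgeDotSet G (-K) = edgeDotSet G K :=
  ((edgeDotSet_subset_neg G (-K)).trans_eq (by rw [neg_neg])).antisymm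
    (edgeDotSet_subset_neg G K)

namespace SimpleGraph

variable {V : Type*} {G : SimpleGraph V}

lemma IsTree.length_eq_dist (hG : G.IsTree) {u v : V} {p : G.Walk u v} (hp : p.IsPath) :
    p.length = G.dist u v := by
  obtain ⟨q, hq, hql⟩ := hG.connected.exists_path_of_dist u v
  rw [← hql, (hG.existsUnique_path u v).unique hp hq]

lemma IsTree.eq_concat_of_dist_eq (hG : G.IsTree) {r i j : V} {p : G.Walk r i} {q : G.Walk r j}
    (hp : p.IsPath) (hq : q.IsPath) (h : G.Adj i j) (hd : G.dist r j = G.dist r i + 1) :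
    q = p.concat h := by
  refine hG.isAcyclic.path_concat hp hq h (by_contra fun hi => ?_)
  have := congrArg Walk.length <| hG.isAcyclic.path_concat hq hp h.symm <|
    hG.isAcyclic.mem_support_of_ne_mem_support_of_adj_of_isPath hp hq h hi
  rw [Walk.length_concat, hG.length_eq_dist hp, hG.length_eq_dist hq] at this
  omega

lemma IsTree.foldl_darts_mem {X : Type*} (hG : G.IsTree) {r v : V} {S : ℕ → Set X} {x₀ : X}
    (hx₀ : x₀ ∈ S 0) {next : V → V → X → X}
    (hnext : ∀ i j u, G.Adj i j → G.dist r j = G.dist r i + 1 → u ∈ S (G.dist r i) →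
      next i j u ∈ S (G.dist r j))
    {p : G.Walk r v} (hp : p.IsPath) :
    p.darts.foldl (fun y d => next d.fst d.snd y) x₀ ∈ S (G.dist r v) := by
  suffices ∀ {u v} (p : G.Walk u v), u = r → p.IsPath →
      p.darts.foldl (fun y d => next d.fst d.snd y) x₀ ∈ S (G.dist r v) from this p rfl hp
  intro u v p
  induction p using Walk.concatRec with
  | Hnil =>
    rintro rfl -
    simpa using hx₀
  | @Hconcat u v w p h ih =>
    rintro rfl hp
    have hp' := (Walk.concat_isPath_iff h).1 hp
    have hd : G.dist u w = G.dist u v + 1 := by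
      rw [← hG.length_eq_dist hp, ← hG.length_eq_dist hp'.1, Walk.length_concat]
    simpa [Walk.darts_concat] using hnext _ _ _ h hd (ih rfl hp'.1)

theorem IsTree.exists_extension {X : Type*} (hG : G.IsTree) (r : V) (S : ℕ → Set X) {x₀ : X}
    (hx₀ : x₀ ∈ S 0) (R : V → V → X → X → Prop)
    (hR : ∀ i j, G.Adj i j → G.dist r j = G.dist r i + 1 →
      ∀ u ∈ S (G.dist r i), ∃ y ∈ S (G.dist r j), R i j u y) :
    ∃ x : V → X, (∀ v, x v ∈ S (G.dist r v)) ∧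
      ∀ i j, G.Adj i j → G.dist r j = G.dist r i + 1 → R i j (x i) (x j) := by
  classical
  have : ∀ i j u, ∃ y, G.Adj i j → G.dist r j = G.dist r i + 1 → u ∈ S (G.dist r i) →
      y ∈ S (G.dist r j) ∧ R i j u y := fun i j u => by
    by_cases h : G.Adj i j ∧ G.dist r j = G.dist r i + 1 ∧ u ∈ S (G.dist r i)
    · obtain ⟨y, hy, hRy⟩ := hR i j h.1 h.2.1 u h.2.2
      exact ⟨y, fun _ _ _ => ⟨hy, hRy⟩⟩
    · exact ⟨x₀, fun h₁ h₂ h₃ => absurd ⟨h₁, h₂, h₃⟩ h⟩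
  choose next hnext using this
  have hmem := fun {v} {p : G.Walk r v} (hp : p.IsPath) =>
    hG.foldl_darts_mem hx₀ (fun i j u h hd hu => (hnext i j u h hd hu).1) hp
  choose path hpath using fun v => (hG.existsUnique_path r v).exists
  refine ⟨fun v => (path v).darts.foldl (fun y d => next d.fst d.snd y) x₀,
    fun v => hmem (hpath v), fun i j hij hd => ?_⟩
  beta_reduce
  rw [hG.eq_concat_of_dist_eq (hpath i) (hpath j) hij hd]
  simpa [Walk.darts_concat] using (hnext i j _ hij hd (hmem (hpath i))).2

lemma Connected.dist_lt_card [Fintype V] (hG : G.Connected) (u v : V) :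
    G.dist u v < Fintype.card V := by
  obtain ⟨p, hp, hpl⟩ := hG.exists_path_of_dist u v
  exact hpl ▸ hp.length_lt

noncomputable def edgeDepth (G : SimpleGraph V) (r : V) (e : G.edgeSet) : ℕ :=
  Sym2.lift ⟨fun i j => min (G.dist r i) (G.dist r j), fun _ _ => min_comm _ _⟩ e.1

lemma edgeDepth_mk {r i j : V} (h : G.Adj i j) (hij : G.dist r j = G.dist r i + 1) :
    G.edgeDepth r ⟨s(i, j), G.mem_edgeSet.mpr h⟩ = G.dist r i := by
  simp [edgeDepth, hij]

lemma IsTree.edgeDepth_lt [Fintype V] (hG : G.IsTree) {r : V} {k : ℕ}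
    (hV : Fintype.card V ≤ k + 1) (e : G.edgeSet) : G.edgeDepth r e < k := by
  obtain ⟨e, he⟩ := e
  induction e using Sym2.ind with
  | _ i j =>
    have := hG.connected.dist_lt_card r i
    have := hG.connected.dist_lt_card r j
    rcases hG.dist_eq_dist_add_one_of_adj r (G.mem_edgeSet.mp he) with h | h <;>
      simp [edgeDepth] <;> omega

lemma IsTree.mem_edgeDotSet [Fintype V] (hG : G.IsTree) {r : V} {k : ℕ}
    (hV : Fintype.card V ≤ k + 1) {K : Set ℝ} {A : ℕ → Set ℝ} {lo hi : ℕ → ℝ}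
    (hAK : ∀ d, A d ⊆ K) (hA₀ : (A 0).Nonempty)
    (hsolve : ∀ d < k, ∀ u₁ ∈ A d, ∀ u₂ ∈ A d, ∀ t ∈ Ioo (lo d) (hi d),
      ∃ y₁ ∈ A (d + 1), ∃ y₂ ∈ A (d + 1), u₁ * y₁ + u₂ * y₂ = t)
    {f : G.edgeSet → ℝ} (hf : ∀ e, f e ∈ Ioo (lo (G.edgeDepth r e)) (hi (G.edgeDepth r e))) :
    f ∈ edgeDotSet G K := by
  obtain ⟨a, ha⟩ := hA₀
  obtain ⟨x, hxA, hxf⟩ := hG.exists_extension r (fun d => A d ×ˢ A d) (x₀ := (a, a)) ⟨ha, ha⟩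
    (fun i j u y => ∀ h : G.Adj i j, f ⟨s(i, j), G.mem_edgeSet.mpr h⟩ = u.1 * y.1 + u.2 * y.2)
    fun i j hij hd u hu => by
      have ht := hf ⟨s(i, j), G.mem_edgeSet.mpr hij⟩
      rw [edgeDepth_mk hij hd] at ht
      obtain ⟨y₁, hy₁, y₂, hy₂, hy⟩ :=
        hsolve _ (by have := hG.connected.dist_lt_card r j; omega) u.1 hu.1 u.2 hu.2 _ ht
      exact ⟨(y₁, y₂), by rw [hd]; exact ⟨hy₁, hy₂⟩, fun _ => hy.symm⟩
  refine ⟨x, fun v => prod_mono (hAK _) (hAK _) (hxA v), fun i j h => ?_⟩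
  rcases hG.dist_eq_dist_add_one_of_adj r h with hd | hd
  · have := hxf j i h.symm hd h.symm
    simp only [Sym2.eq_swap] at this
    rw [this]
    ring
  · exact hxf i j h hd h

end SimpleGraph

theorem interior_edgeDotSet_nonempty {V : Type*} [Fintype V] {G : SimpleGraph V} (hG : G.IsTree)
    {k : ℕ} (hV : Fintype.card V ≤ k + 1) {K : Set ℝ} {A : ℕ → Set ℝ} {lo hi : ℕ → ℝ}
    (hAK : ∀ d, A d ⊆ K) (hA₀ : (A 0).Nonempty) (hlt : ∀ d < k, lo d < hi d)
    (hsolve : ∀ d < k, ∀ u₁ ∈ A d, ∀ u₂ ∈ A d, ∀ t ∈ Ioo (lo d) (hi d),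
      ∃ y₁ ∈ A (d + 1), ∃ y₂ ∈ A (d + 1), u₁ * y₁ + u₂ * y₂ = t) :
    (interior (edgeDotSet G K)).Nonempty := by
  obtain ⟨r⟩ := hG.connected.nonempty
  set box : Set (G.edgeSet → ℝ) :=
    univ.pi fun e => Ioo (lo (G.edgeDepth r e)) (hi (G.edgeDepth r e))
  have hbox : (fun e => (lo (G.edgeDepth r e) + hi (G.edgeDepth r e)) / 2) ∈ box := fun e _ => by
    have := hlt _ (hG.edgeDepth_lt (r := r) hV e)
    constructor <;> linarith
  have hsub : box ⊆ edgeDotSet G K := fun f hf =>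
    hG.mem_edgeDotSet hV hAK hA₀ hsolve fun e => hf e (mem_univ e)
  exact ⟨_, interior_maximal hsub (isOpen_set_pi finite_univ fun _ _ => isOpen_Ioo) hbox⟩

/-- interior of tree dot product sets. -/
theorem tree_dot_interior (K : Set ℝ) (hK : IsCantorSet K) (hτ : 1 ≤ thickness K)
    (k : ℕ) (G : SimpleGraph (Fin (k + 1))) (hT : G.IsTree) :
    (interior {f : G.edgeSet → ℝ |
      ∃ x : Fin (k + 1) → ℝ × ℝ, (∀ i, x i ∈ K ×ˢ K) ∧
        ∀ i j, (h : G.Adj i j) →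
          f ⟨s(i, j), G.mem_edgeSet.mpr h⟩ =
            (x i).1 * (x j).1 + (x i).2 * (x j).2}).Nonempty := by
  have hK' := hK.isThickCantor hτ
  obtain ⟨L, hL, hLK, a, b, hab, hb⟩ :
      ∃ L, IsThickCantor L ∧ edgeDotSet G L = edgeDotSet G K ∧ ∃ a b, IsGap L a b ∧ 0 < b := by
    obtain ⟨a, b, hab⟩ := hK.exists_isGap
    rcases lt_or_ge 0 b with hb | hb
    · exact ⟨K, hK', rfl, a, b, hab, hb⟩
    · exact ⟨-K, hK'.neg, edgeDotSet_neg G K, -b, -a, isGap_neg.2 (by simpa using hab),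
        by linarith [hab.1]⟩
  obtain ⟨A, lo, hi, hAL, hA₀, hlt, hsolve⟩ := hL.exists_levels hab hb k
  change (interior (edgeDotSet G K)).Nonempty
  rw [← hLK]
  exact interior_edgeDotSet_nonempty hT (by simp) hAL hA₀ hlt hsolve
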